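/- The 6-cycle C_6 is an ABCE₂-graph: every consensus function on C_6 satisfying axioms (A), (B), (C), and (E₂) coincides with the median function Med. -/

import Mathlib

namespace ArxivABC

variable {V : Type*}

/-- The metric interval `I(u,v)` between two vertices `u` and `v`. -/
def interval (G : SimpleGraph V) (u v : V) : Set V :=
  {w | G.dist u w + G.dist w v = G.dist u v}

/-- An ABC-function on `G`: a consensus function (profiles are finite multisets of
vertices, so anonymity (A) is built in) returning nonempty sets of vertices, and satisfying
betweenness (B) and consistency (C). -/
structure IsABC (G : SimpleGraph V) (L : Multiset V → Set V) : Prop where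
  nonempty : ∀ π : Multiset V, (L π).Nonempty
  betweenness : ∀ u v : V, L {u, v} = interval G u v
  consistency : ∀ π ρ : Multiset V, (L π ∩ L ρ).Nonempty → L (π + ρ) = L π ∩ L ρ

/-- The total distance `F_π(v)` of a vertex `v` with respect to a profile `π`. -/
noncomputable def cost (G : SimpleGraph V) (π : Multiset V) (v : V) : ℕ :=
  (π.map (G.dist v)).sum

/-- The median set of a profile. -/
def median (G : SimpleGraph V) (π : Multiset V) : Set V :=
  {v | ∀ w, cost G π v ≤ cost G π w}

/-- The 6-cycle on vertices `0, 1, …, 5` (as `ZMod 6`), `i ∼ i ± 1`. -/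
def C6 : SimpleGraph (ZMod 6) where
  Adj i j := j = i + 1 ∨ i = j + 1
  symm := ⟨by intro i j h; exact h.symm⟩
  loopless := ⟨by intro i h; revert h; revert i; decide⟩

/-! ### Distance computation on `C6` -/

def D (z : ZMod 6) : ℕ := min z.val (-z).val

lemma exwk : ∀ (k : ℕ) (u : ZMod 6), ∃ w : C6.Walk u (u + (k : ZMod 6)), w.length = k := by
  intro k
  induction k with
  | zero => intro u; exact ⟨SimpleGraph.Walk.nil.copy rfl (by simp), by simp⟩
  | succ k ih =>
    intro u
    obtain ⟨w, hw⟩ := ih (u + 1)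
    refine ⟨(SimpleGraph.Walk.cons (Or.inl rfl) w).copy rfl (by push_cast; ring), by rw [SimpleGraph.Walk.length_copy]; exact congrArg (· + 1) hw⟩

lemma reach (u v : ZMod 6) : C6.Reachable u v := by
  obtain ⟨w, _⟩ := exwk (v - u).val u
  have : u + ((v - u).val : ZMod 6) = v := by
    rw [ZMod.natCast_val, ZMod.cast_id]; ring
  exact ⟨w.copy rfl this⟩

lemma dist_le_D (x y : ZMod 6) : C6.dist x y ≤ D (y - x) := by
  obtain ⟨w1, h1⟩ := exwk (y - x).val x
  obtain ⟨w2, h2⟩ := exwk (x - y).val y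
  have e1 : x + ((y - x).val : ZMod 6) = y := by rw [ZMod.natCast_val, ZMod.cast_id]; ring
  have e2 : y + ((x - y).val : ZMod 6) = x := by rw [ZMod.natCast_val, ZMod.cast_id]; ring
  have d1 : C6.dist x y ≤ (y - x).val := by
    have := SimpleGraph.dist_le (w1.copy rfl e1); simpa [h1] using this
  have d2 : C6.dist x y ≤ (x - y).val := by
    have := SimpleGraph.dist_le (w2.copy rfl e2)
    rw [SimpleGraph.dist_comm] at this; simpa [h2] using this
  have : (x - y) = -(y - x) := by ring
  rw [D]; rw [this] at d2; omega

lemma D_le_walk {x y : ZMod 6} (w : C6.Walk x y) : D (y - x) ≤ w.length := by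
  induction w with
  | nil => simp [D]
  | @cons a b c h p ih =>
    have step : ∀ x z y : ZMod 6, (z = x + 1 ∨ x = z + 1) → D (y - x) ≤ D (y - z) + 1 := by decide
    have := step a b c h
    simp only [SimpleGraph.Walk.length_cons]
    omega

lemma distEq (x y : ZMod 6) : C6.dist x y = D (y - x) := by
  refine le_antisymm (dist_le_D x y) ?_
  obtain ⟨w, hw⟩ := (reach x y).exists_walk_length_eq_dist
  calc D (y - x) ≤ w.length := D_le_walk w
  _ = _ := hw

/-! ### Small decidable helpers -/

lemma cover : ∀ u : ZMod 6, u = 0 ∨ u = 1 ∨ u = 2 ∨ u = 3 ∨ u = 4 ∨ u = 5 := by decide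

lemma forall6 (p : ZMod 6 → Prop) : (∀ w, p w) ↔ (p 0 ∧ p 1 ∧ p 2 ∧ p 3 ∧ p 4 ∧ p 5) :=
  ⟨fun h => ⟨h 0, h 1, h 2, h 3, h 4, h 5⟩, by
    rintro ⟨h0,h1,h2,h3,h4,h5⟩ w
    rcases cover w with rfl|rfl|rfl|rfl|rfl|rfl <;> assumption⟩

/-! ### Interval lemmas -/

lemma mem_interval {u v w : ZMod 6} : w ∈ interval C6 u v ↔ D (w - u) + D (v - w) = D (v - u) := by
  simp [interval, distEq]

lemma mem_int_shift {u k w : ZMod 6} :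
    w ∈ interval C6 u (u + k) ↔ D (w - u) + D (k - (w - u)) = D k := by
  rw [mem_interval]
  have h1 : u + k - w = k - (w - u) := by ring
  have h2 : u + k - u = k := by ring
  rw [h1, h2]

lemma int0 (u : ZMod 6) : interval C6 u u = {u} := by
  ext w
  have h : ∀ t : ZMod 6, D t + D (0 - t) = D 0 ↔ t = 0 := by decide
  have := @mem_int_shift u 0 w
  rw [add_zero] at this
  rw [this, h, Set.mem_singleton_iff, sub_eq_zero]

lemma int1 (u : ZMod 6) : interval C6 u (u+1) = {u, u+1} := by
  ext w
  have h : ∀ t : ZMod 6, D t + D (1 - t) = D 1 ↔ (t = 0 ∨ t = 1) := by decide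
  rw [mem_int_shift, h]
  simp [sub_eq_zero, sub_eq_iff_eq_add']

lemma int2 (u : ZMod 6) : interval C6 u (u+2) = {u, u+1, u+2} := by
  ext w
  have h : ∀ t : ZMod 6, D t + D (2 - t) = D 2 ↔ (t = 0 ∨ t = 1 ∨ t = 2) := by decide
  rw [mem_int_shift, h]
  simp [sub_eq_zero, sub_eq_iff_eq_add']

lemma int3 (u : ZMod 6) : interval C6 u (u+3) = Set.univ := by
  ext w
  have h : ∀ t : ZMod 6, D t + D (3 - t) = D 3 := by decide
  simp [mem_int_shift, h]

lemma int4 (u : ZMod 6) : interval C6 u (u+4) = {u, u+4, u+5} := by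
  ext w
  have h : ∀ t : ZMod 6, D t + D (4 - t) = D 4 ↔ (t = 0 ∨ t = 4 ∨ t = 5) := by decide
  rw [mem_int_shift, h]
  simp [sub_eq_zero, sub_eq_iff_eq_add']

lemma left_mem_interval (u v : ZMod 6) : u ∈ interval C6 u v := by
  rw [mem_interval]
  simp [D]

lemma right_mem_interval (u v : ZMod 6) : v ∈ interval C6 u v := by
  rw [mem_interval]
  simp [D]

@[simp] lemma ne_0_1 : (((0:ZMod 6) = 1)) = False := by decide
@[simp] lemma ne_0_2 : (((0:ZMod 6) = 2)) = False := by decide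
@[simp] lemma ne_0_3 : (((0:ZMod 6) = 3)) = False := by decide
@[simp] lemma ne_0_4 : (((0:ZMod 6) = 4)) = False := by decide
@[simp] lemma ne_0_5 : (((0:ZMod 6) = 5)) = False := by decide
@[simp] lemma ne_1_0 : (((1:ZMod 6) = 0)) = False := by decide
@[simp] lemma ne_1_2 : (((1:ZMod 6) = 2)) = False := by decide
@[simp] lemma ne_1_3 : (((1:ZMod 6) = 3)) = False := by decide
@[simp] lemma ne_1_4 : (((1:ZMod 6) = 4)) = False := by decide
@[simp] lemma ne_1_5 : (((1:ZMod 6) = 5)) = False := by decide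
@[simp] lemma ne_2_0 : (((2:ZMod 6) = 0)) = False := by decide
@[simp] lemma ne_2_1 : (((2:ZMod 6) = 1)) = False := by decide
@[simp] lemma ne_2_3 : (((2:ZMod 6) = 3)) = False := by decide
@[simp] lemma ne_2_4 : (((2:ZMod 6) = 4)) = False := by decide
@[simp] lemma ne_2_5 : (((2:ZMod 6) = 5)) = False := by decide
@[simp] lemma ne_3_0 : (((3:ZMod 6) = 0)) = False := by decide
@[simp] lemma ne_3_1 : (((3:ZMod 6) = 1)) = False := by decide
@[simp] lemma ne_3_2 : (((3:ZMod 6) = 2)) = False := by decide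
@[simp] lemma ne_3_4 : (((3:ZMod 6) = 4)) = False := by decide
@[simp] lemma ne_3_5 : (((3:ZMod 6) = 5)) = False := by decide
@[simp] lemma ne_4_0 : (((4:ZMod 6) = 0)) = False := by decide
@[simp] lemma ne_4_1 : (((4:ZMod 6) = 1)) = False := by decide
@[simp] lemma ne_4_2 : (((4:ZMod 6) = 2)) = False := by decide
@[simp] lemma ne_4_3 : (((4:ZMod 6) = 3)) = False := by decide
@[simp] lemma ne_4_5 : (((4:ZMod 6) = 5)) = False := by decide
@[simp] lemma ne_5_0 : (((5:ZMod 6) = 0)) = False := by decide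
@[simp] lemma ne_5_1 : (((5:ZMod 6) = 1)) = False := by decide
@[simp] lemma ne_5_2 : (((5:ZMod 6) = 2)) = False := by decide
@[simp] lemma ne_5_3 : (((5:ZMod 6) = 3)) = False := by decide
@[simp] lemma ne_5_4 : (((5:ZMod 6) = 4)) = False := by decide

@[simp] lemma dist_0_0 : C6.dist 0 0 = 0 := by rw [distEq]; decide
@[simp] lemma dist_0_1 : C6.dist 0 1 = 1 := by rw [distEq]; decide
@[simp] lemma dist_0_2 : C6.dist 0 2 = 2 := by rw [distEq]; decide
@[simp] lemma dist_0_3 : C6.dist 0 3 = 3 := by rw [distEq]; decide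
@[simp] lemma dist_0_4 : C6.dist 0 4 = 2 := by rw [distEq]; decide
@[simp] lemma dist_0_5 : C6.dist 0 5 = 1 := by rw [distEq]; decide
@[simp] lemma dist_1_0 : C6.dist 1 0 = 1 := by rw [distEq]; decide
@[simp] lemma dist_1_1 : C6.dist 1 1 = 0 := by rw [distEq]; decide
@[simp] lemma dist_1_2 : C6.dist 1 2 = 1 := by rw [distEq]; decide
@[simp] lemma dist_1_3 : C6.dist 1 3 = 2 := by rw [distEq]; decide
@[simp] lemma dist_1_4 : C6.dist 1 4 = 3 := by rw [distEq]; decide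
@[simp] lemma dist_1_5 : C6.dist 1 5 = 2 := by rw [distEq]; decide
@[simp] lemma dist_2_0 : C6.dist 2 0 = 2 := by rw [distEq]; decide
@[simp] lemma dist_2_1 : C6.dist 2 1 = 1 := by rw [distEq]; decide
@[simp] lemma dist_2_2 : C6.dist 2 2 = 0 := by rw [distEq]; decide
@[simp] lemma dist_2_3 : C6.dist 2 3 = 1 := by rw [distEq]; decide
@[simp] lemma dist_2_4 : C6.dist 2 4 = 2 := by rw [distEq]; decide
@[simp] lemma dist_2_5 : C6.dist 2 5 = 3 := by rw [distEq]; decide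
@[simp] lemma dist_3_0 : C6.dist 3 0 = 3 := by rw [distEq]; decide
@[simp] lemma dist_3_1 : C6.dist 3 1 = 2 := by rw [distEq]; decide
@[simp] lemma dist_3_2 : C6.dist 3 2 = 1 := by rw [distEq]; decide
@[simp] lemma dist_3_3 : C6.dist 3 3 = 0 := by rw [distEq]; decide
@[simp] lemma dist_3_4 : C6.dist 3 4 = 1 := by rw [distEq]; decide
@[simp] lemma dist_3_5 : C6.dist 3 5 = 2 := by rw [distEq]; decide
@[simp] lemma dist_4_0 : C6.dist 4 0 = 2 := by rw [distEq]; decide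
@[simp] lemma dist_4_1 : C6.dist 4 1 = 3 := by rw [distEq]; decide
@[simp] lemma dist_4_2 : C6.dist 4 2 = 2 := by rw [distEq]; decide
@[simp] lemma dist_4_3 : C6.dist 4 3 = 1 := by rw [distEq]; decide
@[simp] lemma dist_4_4 : C6.dist 4 4 = 0 := by rw [distEq]; decide
@[simp] lemma dist_4_5 : C6.dist 4 5 = 1 := by rw [distEq]; decide
@[simp] lemma dist_5_0 : C6.dist 5 0 = 1 := by rw [distEq]; decide
@[simp] lemma dist_5_1 : C6.dist 5 1 = 2 := by rw [distEq]; decide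
@[simp] lemma dist_5_2 : C6.dist 5 2 = 3 := by rw [distEq]; decide
@[simp] lemma dist_5_3 : C6.dist 5 3 = 2 := by rw [distEq]; decide
@[simp] lemma dist_5_4 : C6.dist 5 4 = 1 := by rw [distEq]; decide
@[simp] lemma dist_5_5 : C6.dist 5 5 = 0 := by rw [distEq]; decide

lemma cost_add (s t : Multiset (ZMod 6)) (x : ZMod 6) :
    cost C6 (s + t) x = cost C6 s x + cost C6 t x := by
  simp [cost]

lemma costSum (π : Multiset (ZMod 6)) (x : ZMod 6) :
    cost C6 π x = ∑ z : ZMod 6, π.count z * C6.dist x z := by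
  induction π using Multiset.induction with
  | empty => simp [cost]
  | cons a s ih =>
    have hc : cost C6 (a ::ₘ s) x = C6.dist x a + cost C6 s x := by
      simp [cost]
    rw [hc, ih]
    have : ∀ z : ZMod 6, (a ::ₘ s).count z = s.count z + if z = a then 1 else 0 := by
      intro z; rw [Multiset.count_cons]
    simp only [this, add_mul, Finset.sum_add_distrib, ite_mul, one_mul, zero_mul,
      Finset.sum_ite_eq', Finset.mem_univ, if_true]
    omega

lemma costFull (π : Multiset (ZMod 6)) (x : ZMod 6) :
    cost C6 π x = π.count 0 * C6.dist x 0 + π.count 1 * C6.dist x 1 + π.count 2 * C6.dist x 2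
      + π.count 3 * C6.dist x 3 + π.count 4 * C6.dist x 4 + π.count 5 * C6.dist x 5 := by
  rw [costSum]; exact Fin.sum_univ_six _

lemma med_ne (π : Multiset (ZMod 6)) : (median C6 π).Nonempty := by
  obtain ⟨x, hx⟩ := Finite.exists_min (cost C6 π)
  exact ⟨x, hx⟩

lemma med0 : median C6 (0 : Multiset (ZMod 6)) = Set.univ := by
  ext x; simp [median, cost]

lemma mem_median {π : Multiset (ZMod 6)} {x : ZMod 6} :
    x ∈ median C6 π ↔ ∀ w, cost C6 π x ≤ cost C6 π w := Iff.rfl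

@[simp] lemma add_0_0 : (0:ZMod 6) + 0 = 0 := by decide
@[simp] lemma add_0_1 : (0:ZMod 6) + 1 = 1 := by decide
@[simp] lemma add_0_2 : (0:ZMod 6) + 2 = 2 := by decide
@[simp] lemma add_0_3 : (0:ZMod 6) + 3 = 3 := by decide
@[simp] lemma add_0_4 : (0:ZMod 6) + 4 = 4 := by decide
@[simp] lemma add_0_5 : (0:ZMod 6) + 5 = 5 := by decide
@[simp] lemma add_1_0 : (1:ZMod 6) + 0 = 1 := by decide
@[simp] lemma add_1_1 : (1:ZMod 6) + 1 = 2 := by decide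
@[simp] lemma add_1_2 : (1:ZMod 6) + 2 = 3 := by decide
@[simp] lemma add_1_3 : (1:ZMod 6) + 3 = 4 := by decide
@[simp] lemma add_1_4 : (1:ZMod 6) + 4 = 5 := by decide
@[simp] lemma add_1_5 : (1:ZMod 6) + 5 = 0 := by decide
@[simp] lemma add_2_0 : (2:ZMod 6) + 0 = 2 := by decide
@[simp] lemma add_2_1 : (2:ZMod 6) + 1 = 3 := by decide
@[simp] lemma add_2_2 : (2:ZMod 6) + 2 = 4 := by decide
@[simp] lemma add_2_3 : (2:ZMod 6) + 3 = 5 := by decide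
@[simp] lemma add_2_4 : (2:ZMod 6) + 4 = 0 := by decide
@[simp] lemma add_2_5 : (2:ZMod 6) + 5 = 1 := by decide
@[simp] lemma add_3_0 : (3:ZMod 6) + 0 = 3 := by decide
@[simp] lemma add_3_1 : (3:ZMod 6) + 1 = 4 := by decide
@[simp] lemma add_3_2 : (3:ZMod 6) + 2 = 5 := by decide
@[simp] lemma add_3_3 : (3:ZMod 6) + 3 = 0 := by decide
@[simp] lemma add_3_4 : (3:ZMod 6) + 4 = 1 := by decide
@[simp] lemma add_3_5 : (3:ZMod 6) + 5 = 2 := by decide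
@[simp] lemma add_4_0 : (4:ZMod 6) + 0 = 4 := by decide
@[simp] lemma add_4_1 : (4:ZMod 6) + 1 = 5 := by decide
@[simp] lemma add_4_2 : (4:ZMod 6) + 2 = 0 := by decide
@[simp] lemma add_4_3 : (4:ZMod 6) + 3 = 1 := by decide
@[simp] lemma add_4_4 : (4:ZMod 6) + 4 = 2 := by decide
@[simp] lemma add_4_5 : (4:ZMod 6) + 5 = 3 := by decide
@[simp] lemma add_5_0 : (5:ZMod 6) + 0 = 5 := by decide
@[simp] lemma add_5_1 : (5:ZMod 6) + 1 = 0 := by decide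
@[simp] lemma add_5_2 : (5:ZMod 6) + 2 = 1 := by decide
@[simp] lemma add_5_3 : (5:ZMod 6) + 3 = 2 := by decide
@[simp] lemma add_5_4 : (5:ZMod 6) + 4 = 3 := by decide
@[simp] lemma add_5_5 : (5:ZMod 6) + 5 = 4 := by decide

section Claims

set_option maxHeartbeats 1600000

lemma medClaim5 (u : ZMod 6) (π : Multiset (ZMod 6))
    (h0 : 1 ≤ π.count u)
    (h1 : π.count (u+1) = 0) (h2 : π.count (u+2) = 0) (h3 : π.count (u+3) = 0)
    (h4 : π.count (u+4) = 0) (h5 : π.count (u+5) = 0) :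
    median C6 (π - {u}) ∩ ({u} : Set (ZMod 6)) = median C6 π := by
  rcases cover u with rfl|rfl|rfl|rfl|rfl|rfl <;>
  · simp only [add_0_0, add_0_1, add_0_2, add_0_3, add_0_4, add_0_5, add_1_0, add_1_1, add_1_2, add_1_3, add_1_4, add_1_5, add_2_0, add_2_1, add_2_2, add_2_3, add_2_4, add_2_5, add_3_0, add_3_1, add_3_2, add_3_3, add_3_4, add_3_5, add_4_0, add_4_1, add_4_2, add_4_3, add_4_4, add_4_5, add_5_0, add_5_1, add_5_2, add_5_3, add_5_4, add_5_5] at *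
    ext x
    rcases cover x with rfl|rfl|rfl|rfl|rfl|rfl <;>
    · simp only [Set.mem_inter_iff, Set.mem_singleton_iff, Set.mem_insert_iff, mem_median, forall6,
        costFull, Multiset.count_sub, Multiset.insert_eq_cons, Multiset.count_cons,
        Multiset.count_singleton, add_0_0, add_0_1, add_0_2, add_0_3, add_0_4, add_0_5, add_1_0, add_1_1, add_1_2, add_1_3, add_1_4, add_1_5, add_2_0, add_2_1, add_2_2, add_2_3, add_2_4, add_2_5, add_3_0, add_3_1, add_3_2, add_3_3, add_3_4, add_3_5, add_4_0, add_4_1, add_4_2, add_4_3, add_4_4, add_4_5, add_5_0, add_5_1, add_5_2, add_5_3, add_5_4, add_5_5, dist_0_0, dist_0_1, dist_0_2, dist_0_3, dist_0_4, dist_0_5, dist_1_0, dist_1_1, dist_1_2, dist_1_3, dist_1_4, dist_1_5, dist_2_0, dist_2_1, dist_2_2, dist_2_3, dist_2_4, dist_2_5, dist_3_0, dist_3_1, dist_3_2, dist_3_3, dist_3_4, dist_3_5, dist_4_0, dist_4_1, dist_4_2, dist_4_3, dist_4_4, dist_4_5, dist_5_0, dist_5_1, dist_5_2, dist_5_3,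 dist_5_4, dist_5_5, ne_0_1, ne_0_2, ne_0_3, ne_0_4, ne_0_5, ne_1_0, ne_1_2, ne_1_3, ne_1_4, ne_1_5, ne_2_0, ne_2_1, ne_2_3, ne_2_4, ne_2_5, ne_3_0, ne_3_1, ne_3_2, ne_3_4, ne_3_5, ne_4_0, ne_4_1, ne_4_2, ne_4_3, ne_4_5, ne_5_0, ne_5_1, ne_5_2, ne_5_3, ne_5_4, if_false, if_true, eq_self_iff_true, and_true,
        true_and, false_and, and_false, false_iff, iff_false, not_true, not_false_iff, false_or,
        or_false]
      omega

lemma medClaim4 (u : ZMod 6) (π : Multiset (ZMod 6))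
    (h0 : 1 ≤ π.count u) (h1 : 1 ≤ π.count (u+1))
    (h2 : π.count (u+2) = 0) (h3 : π.count (u+3) = 0)
    (h4 : π.count (u+4) = 0) (h5 : π.count (u+5) = 0) :
    median C6 (π - {u, u+1}) ∩ ({u, u+1} : Set (ZMod 6)) = median C6 π := by
  rcases cover u with rfl|rfl|rfl|rfl|rfl|rfl <;>
  · simp only [add_0_0, add_0_1, add_0_2, add_0_3, add_0_4, add_0_5, add_1_0, add_1_1, add_1_2, add_1_3, add_1_4, add_1_5, add_2_0, add_2_1, add_2_2, add_2_3, add_2_4, add_2_5, add_3_0, add_3_1, add_3_2, add_3_3, add_3_4, add_3_5, add_4_0, add_4_1, add_4_2, add_4_3, add_4_4, add_4_5, add_5_0, add_5_1, add_5_2, add_5_3, add_5_4, add_5_5] at *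
    ext x
    rcases cover x with rfl|rfl|rfl|rfl|rfl|rfl <;>
    · simp only [Set.mem_inter_iff, Set.mem_singleton_iff, Set.mem_insert_iff, mem_median, forall6,
        costFull, Multiset.count_sub, Multiset.insert_eq_cons, Multiset.count_cons,
        Multiset.count_singleton, add_0_0, add_0_1, add_0_2, add_0_3, add_0_4, add_0_5, add_1_0, add_1_1, add_1_2, add_1_3, add_1_4, add_1_5, add_2_0, add_2_1, add_2_2, add_2_3, add_2_4, add_2_5, add_3_0, add_3_1, add_3_2, add_3_3, add_3_4, add_3_5, add_4_0, add_4_1, add_4_2, add_4_3, add_4_4, add_4_5, add_5_0, add_5_1, add_5_2, add_5_3, add_5_4, add_5_5, dist_0_0, dist_0_1, dist_0_2, dist_0_3, dist_0_4, dist_0_5, dist_1_0, dist_1_1, dist_1_2, dist_1_3, dist_1_4, dist_1_5, dist_2_0, dist_2_1, dist_2_2, dist_2_3, dist_2_4, dist_2_5, dist_3_0, dist_3_1, dist_3_2, dist_3_3, dist_3_4, dist_3_5, dist_4_0, dist_4_1, dist_4_2, dist_4_3, dist_4_4, dist_4_5, dist_5_0, dist_5_1, dist_5_2, dist_5_3,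 dist_5_4, dist_5_5, ne_0_1, ne_0_2, ne_0_3, ne_0_4, ne_0_5, ne_1_0, ne_1_2, ne_1_3, ne_1_4, ne_1_5, ne_2_0, ne_2_1, ne_2_3, ne_2_4, ne_2_5, ne_3_0, ne_3_1, ne_3_2, ne_3_4, ne_3_5, ne_4_0, ne_4_1, ne_4_2, ne_4_3, ne_4_5, ne_5_0, ne_5_1, ne_5_2, ne_5_3, ne_5_4, if_false, if_true, eq_self_iff_true, and_true,
        true_and, false_and, and_false, false_iff, iff_false, not_true, not_false_iff, false_or,
        or_false]
      omega

lemma medClaim3 (u : ZMod 6) (π : Multiset (ZMod 6))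
    (h5' : 1 ≤ π.count (u+5)) (h1 : 1 ≤ π.count (u+1))
    (h2 : π.count (u+2) = 0) (h3 : π.count (u+3) = 0) (h4 : π.count (u+4) = 0) :
    median C6 (π - {u+5, u+1}) ∩ ({u+5, u, u+1} : Set (ZMod 6)) = median C6 π := by
  rcases cover u with rfl|rfl|rfl|rfl|rfl|rfl <;>
  · simp only [add_0_0, add_0_1, add_0_2, add_0_3, add_0_4, add_0_5, add_1_0, add_1_1, add_1_2, add_1_3, add_1_4, add_1_5, add_2_0, add_2_1, add_2_2, add_2_3, add_2_4, add_2_5, add_3_0, add_3_1, add_3_2, add_3_3, add_3_4, add_3_5, add_4_0, add_4_1, add_4_2, add_4_3, add_4_4, add_4_5, add_5_0, add_5_1, add_5_2, add_5_3, add_5_4, add_5_5] at *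
    ext x
    rcases cover x with rfl|rfl|rfl|rfl|rfl|rfl <;>
    · simp only [Set.mem_inter_iff, Set.mem_singleton_iff, Set.mem_insert_iff, mem_median, forall6,
        costFull, Multiset.count_sub, Multiset.insert_eq_cons, Multiset.count_cons,
        Multiset.count_singleton, add_0_0, add_0_1, add_0_2, add_0_3, add_0_4, add_0_5, add_1_0, add_1_1, add_1_2, add_1_3, add_1_4, add_1_5, add_2_0, add_2_1, add_2_2, add_2_3, add_2_4, add_2_5, add_3_0, add_3_1, add_3_2, add_3_3, add_3_4, add_3_5, add_4_0, add_4_1, add_4_2, add_4_3, add_4_4, add_4_5, add_5_0, add_5_1, add_5_2, add_5_3, add_5_4, add_5_5, dist_0_0, dist_0_1, dist_0_2, dist_0_3, dist_0_4, dist_0_5, dist_1_0, dist_1_1, dist_1_2, dist_1_3, dist_1_4, dist_1_5, dist_2_0, dist_2_1, dist_2_2, dist_2_3, dist_2_4, dist_2_5, dist_3_0, dist_3_1, dist_3_2, dist_3_3, dist_3_4, dist_3_5, dist_4_0, dist_4_1, dist_4_2, dist_4_3, dist_4_4, dist_4_5, dist_5_0, dist_5_1, dist_5_2, dist_5_3,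 dist_5_4, dist_5_5, ne_0_1, ne_0_2, ne_0_3, ne_0_4, ne_0_5, ne_1_0, ne_1_2, ne_1_3, ne_1_4, ne_1_5, ne_2_0, ne_2_1, ne_2_3, ne_2_4, ne_2_5, ne_3_0, ne_3_1, ne_3_2, ne_3_4, ne_3_5, ne_4_0, ne_4_1, ne_4_2, ne_4_3, ne_4_5, ne_5_0, ne_5_1, ne_5_2, ne_5_3, ne_5_4, if_false, if_true, eq_self_iff_true, and_true,
        true_and, false_and, and_false, false_iff, iff_false, not_true, not_false_iff, false_or,
        or_false]
      omega

lemma medClaim2 (u : ZMod 6) (π : Multiset (ZMod 6))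
    (h0 : 1 ≤ π.count u) (h2 : 1 ≤ π.count (u+2)) (h4 : 1 ≤ π.count (u+4))
    (h1 : π.count (u+1) = 0) (h3 : π.count (u+3) = 0) (h5 : π.count (u+5) = 0) :
    median C6 (π - {u, u+2, u+4}) ∩ ({u, u+2, u+4} : Set (ZMod 6)) = median C6 π := by
  rcases cover u with rfl|rfl|rfl|rfl|rfl|rfl <;>
  · simp only [add_0_0, add_0_1, add_0_2, add_0_3, add_0_4, add_0_5, add_1_0, add_1_1, add_1_2, add_1_3, add_1_4, add_1_5, add_2_0, add_2_1, add_2_2, add_2_3, add_2_4, add_2_5, add_3_0, add_3_1, add_3_2, add_3_3, add_3_4, add_3_5, add_4_0, add_4_1, add_4_2, add_4_3, add_4_4, add_4_5, add_5_0, add_5_1, add_5_2, add_5_3, add_5_4, add_5_5] at *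
    ext x
    rcases cover x with rfl|rfl|rfl|rfl|rfl|rfl <;>
    · simp only [Set.mem_inter_iff, Set.mem_singleton_iff, Set.mem_insert_iff, mem_median, forall6,
        costFull, Multiset.count_sub, Multiset.insert_eq_cons, Multiset.count_cons,
        Multiset.count_singleton, add_0_0, add_0_1, add_0_2, add_0_3, add_0_4, add_0_5, add_1_0, add_1_1, add_1_2, add_1_3, add_1_4, add_1_5, add_2_0, add_2_1, add_2_2, add_2_3, add_2_4, add_2_5, add_3_0, add_3_1, add_3_2, add_3_3, add_3_4, add_3_5, add_4_0, add_4_1, add_4_2, add_4_3, add_4_4, add_4_5, add_5_0, add_5_1, add_5_2, add_5_3, add_5_4, add_5_5, dist_0_0, dist_0_1, dist_0_2, dist_0_3, dist_0_4, dist_0_5, dist_1_0, dist_1_1, dist_1_2, dist_1_3, dist_1_4, dist_1_5, dist_2_0, dist_2_1, dist_2_2, dist_2_3, dist_2_4, dist_2_5, dist_3_0, dist_3_1, dist_3_2, dist_3_3, dist_3_4, dist_3_5, dist_4_0, dist_4_1, dist_4_2, dist_4_3, dist_4_4, dist_4_5, dist_5_0, dist_5_1, dist_5_2, dist_5_3,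 dist_5_4, dist_5_5, ne_0_1, ne_0_2, ne_0_3, ne_0_4, ne_0_5, ne_1_0, ne_1_2, ne_1_3, ne_1_4, ne_1_5, ne_2_0, ne_2_1, ne_2_3, ne_2_4, ne_2_5, ne_3_0, ne_3_1, ne_3_2, ne_3_4, ne_3_5, ne_4_0, ne_4_1, ne_4_2, ne_4_3, ne_4_5, ne_5_0, ne_5_1, ne_5_2, ne_5_3, ne_5_4, if_false, if_true, eq_self_iff_true, and_true,
        true_and, false_and, and_false, false_iff, iff_false, not_true, not_false_iff, false_or,
        or_false]
      omega

end Claims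

section Lpart

variable (L : Multiset (ZMod 6) → Set (ZMod 6))

lemma Lsingle (hL : IsABC C6 L) (u : ZMod 6) : L {u} = {u} := by
  have h3 : L ({u} + {u}) = L {u} ∩ L {u} :=
    hL.consistency _ _ (by rw [Set.inter_self]; exact hL.nonempty _)
  have h4 : ({u} : Multiset (ZMod 6)) + {u} = ({u, u} : Multiset (ZMod 6)) := by
    rw [Multiset.singleton_add]; rfl
  rw [h4, hL.betweenness, Set.inter_self] at h3
  rw [← h3, int0]

lemma Lempty (hL : IsABC C6 L) : L 0 = Set.univ := by
  obtain ⟨u, hu⟩ := hL.nonempty 0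
  ext v
  simp only [Set.mem_univ, iff_true]
  have h := hL.consistency {u, v} 0
    ⟨u, by rw [hL.betweenness]; exact left_mem_interval u v, hu⟩
  rw [add_zero, hL.betweenness] at h
  have hm := right_mem_interval u v
  rw [h] at hm
  exact hm.2

lemma excl (hL : IsABC C6 L) (T : Multiset (ZMod 6)) (m p q r s : ZMod 6)
    (hsum : T + {m} = ({p, q} : Multiset (ZMod 6)) + {r, s})
    (hanti : interval C6 r s = Set.univ)
    (hpm : p ≠ m) : m ∉ L T := by
  intro hm
  have hLm : L {m} = {m} := Lsingle L hL m
  have h1 : L (T + {m}) = L T ∩ L {m} :=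
    hL.consistency _ _ ⟨m, hm, by rw [hLm]; rfl⟩
  have hne : (L {p, q} ∩ L {r, s}).Nonempty := by
    rw [hL.betweenness, hL.betweenness, hanti]
    exact ⟨p, left_mem_interval p q, trivial⟩
  have h2 : L (({p, q} : Multiset (ZMod 6)) + {r, s}) = interval C6 p q ∩ interval C6 r s := by
    rw [hL.consistency _ _ hne, hL.betweenness, hL.betweenness]
  have h3 : L (T + {m}) = interval C6 p q := by
    rw [hsum, h2, hanti, Set.inter_univ]
  have hzin : p ∈ L T ∩ L {m} := by rw [← h1, h3]; exact left_mem_interval p q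
  have := hzin.2
  rw [hLm] at this
  exact hpm this

lemma neadd : ∀ v : ZMod 6, (v ≠ v+1) ∧ (v+2 ≠ v+3) ∧ (v+4 ≠ v+5) := by decide

lemma mperm (a b c d : ZMod 6) :
    ({a, b, c} : Multiset (ZMod 6)) + {d} = ({a, b} : Multiset (ZMod 6)) + {d, c} := by
  simp only [Multiset.insert_eq_cons, Multiset.cons_add, Multiset.singleton_add, zero_add,
    ← Multiset.cons_zero]
  rw [Multiset.cons_swap c d]

lemma mrot (a b c : ZMod 6) : ({a, b, c} : Multiset (ZMod 6)) = {b, c, a} := by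
  simp only [Multiset.insert_eq_cons, ← Multiset.cons_zero]
  rw [Multiset.cons_swap a b, Multiset.cons_swap a c]

lemma iset1 : ∀ b w : ZMod 6,
    ((w = b ∨ w = b+1 ∨ w = b+2) ∧ (w = b ∨ w = b+4 ∨ w = b+5)) ↔ w = b := by decide
lemma iset2 : ∀ b w : ZMod 6,
    ((w = b ∨ w = b+1 ∨ w = b+2) ∧ (w = b+2 ∨ w = b+3 ∨ w = b+4)) ↔ w = b+2 := by decide
lemma iset3 : ∀ b w : ZMod 6,
    ((w = b ∨ w = b+4 ∨ w = b+5) ∧ (w = b+2 ∨ w = b+3 ∨ w = b+4)) ↔ w = b+4 := by decide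

lemma tripleL (hL : IsABC C6 L)
    (hE2 : ∀ u v w : ZMod 6,
      C6.dist u v = 2 → C6.dist v w = 2 → C6.dist u w = 2 →
      interval C6 u v ∩ interval C6 u w = {u} →
      interval C6 u v ∩ interval C6 v w = {v} →
      interval C6 u w ∩ interval C6 v w = {w} →
      u ∈ L {u, v, w} → ({u, v, w} : Set (ZMod 6)) ⊆ L {u, v, w}) :
    ∀ v : ZMod 6, L {v, v+2, v+4} = ({v, v+2, v+4} : Set (ZMod 6)) := by
  have e2core : ∀ b : ZMod 6, b ∈ L {b, b+2, b+4} →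
      ({b, b+2, b+4} : Set (ZMod 6)) ⊆ L {b, b+2, b+4} := by
    intro b hb
    have d1 : C6.dist b (b+2) = 2 := by
      rw [distEq, add_sub_cancel_left]; decide
    have d2 : C6.dist (b+2) (b+4) = 2 := by
      rw [distEq, show b+4-(b+2) = 2 from by ring]; decide
    have d3 : C6.dist b (b+4) = 2 := by
      rw [distEq, add_sub_cancel_left]; decide
    have e1 : (b+2)+1 = b+3 := by rw [add_assoc]; norm_num
    have e2 : (b+2)+2 = b+4 := by rw [add_assoc]; norm_num
    have hi2 : interval C6 (b+2) (b+4) = {b+2, b+3, b+4} := by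
      rw [← e2, int2, e1, e2]
    have hI1 : interval C6 b (b+2) ∩ interval C6 b (b+4) = {b} := by
      ext w
      rw [Set.mem_inter_iff, int2, int4]
      simp only [Set.mem_insert_iff, Set.mem_singleton_iff]
      exact iset1 b w
    have hI2 : interval C6 b (b+2) ∩ interval C6 (b+2) (b+4) = {b+2} := by
      ext w
      rw [Set.mem_inter_iff, int2, hi2]
      simp only [Set.mem_insert_iff, Set.mem_singleton_iff]
      exact iset2 b w
    have hI3 : interval C6 b (b+4) ∩ interval C6 (b+2) (b+4) = {b+4} := by
      ext w
      rw [Set.mem_inter_iff, int4, hi2]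
      simp only [Set.mem_insert_iff, Set.mem_singleton_iff]
      exact iset3 b w
    exact hE2 b (b+2) (b+4) d1 d2 d3 hI1 hI2 hI3 hb
  intro v
  -- exclusions of the three "odd" vertices
  have hx1 : (v+1) ∉ L {v, v+2, v+4} := by
    refine excl L hL _ (v+1) v (v+2) (v+1) (v+4) (mperm v (v+2) (v+4) (v+1)) ?_ ?_
    · have h := int3 (v+1)
      rwa [show (v+1)+3 = v+4 from by rw [add_assoc]; norm_num] at h
    · exact (neadd v).1
  have hx3 : (v+3) ∉ L {v, v+2, v+4} := by
    refine excl L hL _ (v+3) (v+2) (v+4) (v+3) v ?_ ?_ ?_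
    · rw [mrot v (v+2) (v+4)]; exact mperm (v+2) (v+4) v (v+3)
    · have h := int3 (v+3)
      rwa [show (v+3)+3 = v from by rw [add_assoc, show (3:ZMod 6)+3 = 0 from by decide, add_zero]] at h
    · exact (neadd v).2.1
  have hx5 : (v+5) ∉ L {v, v+2, v+4} := by
    refine excl L hL _ (v+5) (v+4) v (v+5) (v+2) ?_ ?_ ?_
    · rw [mrot v (v+2) (v+4), mrot (v+2) (v+4) v]
      exact mperm (v+4) v (v+2) (v+5)
    · have h := int3 (v+5)
      rwa [show (v+5)+3 = v+2 from by rw [add_assoc, show (5:ZMod 6)+3 = 2 from by decide]] at h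
    · exact (neadd v).2.2
  have hsub : L {v, v+2, v+4} ⊆ ({v, v+2, v+4} : Set (ZMod 6)) := by
    intro x hx
    have rel : ∀ x v : ZMod 6,
        x = v ∨ x = v+1 ∨ x = v+2 ∨ x = v+3 ∨ x = v+4 ∨ x = v+5 := by decide
    rcases rel x v with h|h|h|h|h|h
    · exact h ▸ Set.mem_insert _ _
    · exact absurd (h ▸ hx) hx1
    · rw [h]; right; exact Set.mem_insert _ _
    · exact absurd (h ▸ hx) hx3
    · rw [h]; right; right; exact Set.mem_singleton _
    · exact absurd (h ▸ hx) hx5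
  obtain ⟨u0, hu0⟩ := hL.nonempty {v, v+2, v+4}
  have hu0T := hsub hu0
  have hfull : ({v, v+2, v+4} : Set (ZMod 6)) ⊆ L {v, v+2, v+4} := by
    rcases hu0T with h|h|h
    · exact e2core v (h ▸ hu0)
    · -- u0 = v + 2
      have em1 : (v+2)+2 = v+4 := by rw [add_assoc]; norm_num
      have em2 : (v+2)+4 = v := by rw [add_assoc, show (2:ZMod 6)+4 = 0 from by decide, add_zero]
      have hmeq : ({v+2, (v+2)+2, (v+2)+4} : Multiset (ZMod 6)) = {v, v+2, v+4} := by
        rw [em1, em2]; exact (mrot v (v+2) (v+4)).symm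
      have hseq : ({v+2, (v+2)+2, (v+2)+4} : Set (ZMod 6)) = {v, v+2, v+4} := by
        rw [em1, em2]; ext w
        simp only [Set.mem_insert_iff, Set.mem_singleton_iff]; tauto
      have hb : (v+2) ∈ L {v+2, (v+2)+2, (v+2)+4} := by rw [hmeq]; exact h ▸ hu0
      have := e2core (v+2) hb
      rwa [hmeq, hseq] at this
    · -- u0 = v + 4
      have em1 : (v+4)+2 = v := by rw [add_assoc, show (4:ZMod 6)+2 = 0 from by decide, add_zero]
      have em2 : (v+4)+4 = v+2 := by rw [add_assoc, show (4:ZMod 6)+4 = 2 from by decide]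
      have hmeq : ({v+4, (v+4)+2, (v+4)+4} : Multiset (ZMod 6)) = {v, v+2, v+4} := by
        rw [em1, em2, mrot v (v+2) (v+4), mrot (v+2) (v+4) v]
      have hseq : ({v+4, (v+4)+2, (v+4)+4} : Set (ZMod 6)) = {v, v+2, v+4} := by
        rw [em1, em2]; ext w
        simp only [Set.mem_insert_iff, Set.mem_singleton_iff]; tauto
      have hb : (v+4) ∈ L {v+4, (v+4)+2, (v+4)+4} := by rw [hmeq]; exact h ▸ hu0
      have := e2core (v+4) hb
      rwa [hmeq, hseq] at this
  exact le_antisymm hsub hfull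

end Lpart

section Cases

variable (L : Multiset (ZMod 6) → Set (ZMod 6))

lemma sub1 {x : ZMod 6} {π : Multiset (ZMod 6)} (hx : 1 ≤ π.count x) :
    ({x} : Multiset (ZMod 6)) ≤ π := by
  rw [Multiset.singleton_le]
  exact Multiset.count_pos.1 hx

lemma sub2 {x y : ZMod 6} {π : Multiset (ZMod 6)} (hxy : x ≠ y)
    (hx : 1 ≤ π.count x) (hy : 1 ≤ π.count y) : ({x, y} : Multiset (ZMod 6)) ≤ π := by
  rw [Multiset.le_iff_count]
  intro a
  rw [Multiset.insert_eq_cons, Multiset.count_cons, Multiset.count_singleton]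
  split_ifs with h1 h2 h2
  · exact absurd (h2.symm.trans h1) hxy
  · subst h1; omega
  · subst h2; omega
  · omega

lemma sub3 {x y z : ZMod 6} {π : Multiset (ZMod 6)} (hxy : x ≠ y) (hxz : x ≠ z) (hyz : y ≠ z)
    (hx : 1 ≤ π.count x) (hy : 1 ≤ π.count y) (hz : 1 ≤ π.count z) :
    ({x, y, z} : Multiset (ZMod 6)) ≤ π := by
  rw [Multiset.le_iff_count]
  intro a
  rw [Multiset.insert_eq_cons, Multiset.insert_eq_cons, Multiset.count_cons,
    Multiset.count_cons, Multiset.count_singleton]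
  split_ifs <;> subst_eqs <;> simp_all

lemma sublt {ρ π : Multiset (ZMod 6)} (hle : ρ ≤ π) (h0 : ρ ≠ 0) : π - ρ < π := by
  have h := tsub_add_cancel_of_le hle
  refine lt_of_le_of_ne tsub_le_self fun he => h0 ?_
  rw [he] at h
  have : π + ρ = π + 0 := by rw [add_zero]; exact h
  exact add_left_cancel this

lemma Dpair : ∀ u x : ZMod 6, D (u - x) + D (u + 3 - x) = 3 := by decide

lemma medClaim1 (u : ZMod 6) (π : Multiset (ZMod 6))
    (h0 : 1 ≤ π.count u) (h3 : 1 ≤ π.count (u+3)) :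
    median C6 (π - {u, u+3}) = median C6 π := by
  have hne : u ≠ u + 3 := by
    have : ∀ v : ZMod 6, v ≠ v + 3 := by decide
    exact this u
  have hle : ({u, u+3} : Multiset (ZMod 6)) ≤ π := sub2 hne h0 h3
  have hσ : (π - {u, u+3}) + ({u, u+3} : Multiset (ZMod 6)) = π := tsub_add_cancel_of_le hle
  have hpair : ∀ x, cost C6 ({u, u+3} : Multiset (ZMod 6)) x = 3 := by
    intro x
    have : cost C6 ({u, u+3} : Multiset (ZMod 6)) x = C6.dist x u + C6.dist x (u+3) := by
      simp [cost]
    rw [this, distEq, distEq, Dpair]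
  have hc : ∀ x, cost C6 π x = cost C6 (π - {u, u+3}) x + 3 := by
    intro x
    conv_lhs => rw [← hσ]
    rw [cost_add, hpair]
  ext x
  simp only [mem_median]
  constructor <;> intro h w <;> have hw := h w <;> have h1 := hc x <;> have h2 := hc w <;> omega

lemma case1 (hL : IsABC C6 L) (π : Multiset (ZMod 6)) (u : ZMod 6)
    (h0 : 1 ≤ π.count u) (h3 : 1 ≤ π.count (u+3))
    (IH : ∀ σ, σ < π → L σ = median C6 σ) : L π = median C6 π := by
  set ρ : Multiset (ZMod 6) := {u, u+3} with hρdef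
  have hne : u ≠ u + 3 := by
    have : ∀ v : ZMod 6, v ≠ v + 3 := by decide
    exact this u
  have hle : ρ ≤ π := sub2 hne h0 h3
  have hρ0 : ρ ≠ 0 := by simp [hρdef, Multiset.insert_eq_cons]
  have hσ : (π - ρ) + ρ = π := tsub_add_cancel_of_le hle
  have hLσ : L (π - ρ) = median C6 (π - ρ) := IH _ (sublt hle hρ0)
  have hK : L ρ = Set.univ := by
    rw [hρdef, hL.betweenness, int3]
  have hclaim : median C6 (π - ρ) = median C6 π := medClaim1 u π h0 h3
  have hmne : (L (π - ρ) ∩ L ρ).Nonempty := by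
    rw [hLσ, hK, Set.inter_univ, hclaim]
    exact med_ne π
  calc L π = L ((π - ρ) + ρ) := by rw [hσ]
    _ = L (π - ρ) ∩ L ρ := hL.consistency _ _ hmne
    _ = median C6 π := by rw [hLσ, hK, Set.inter_univ, hclaim]

lemma case2 (hL : IsABC C6 L)
    (htri : ∀ v : ZMod 6, L {v, v+2, v+4} = ({v, v+2, v+4} : Set (ZMod 6)))
    (π : Multiset (ZMod 6)) (u : ZMod 6)
    (h0 : 1 ≤ π.count u) (h2 : 1 ≤ π.count (u+2)) (h4 : 1 ≤ π.count (u+4))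
    (z1 : π.count (u+1) = 0) (z3 : π.count (u+3) = 0) (z5 : π.count (u+5) = 0)
    (IH : ∀ σ, σ < π → L σ = median C6 σ) : L π = median C6 π := by
  set ρ : Multiset (ZMod 6) := {u, u+2, u+4} with hρdef
  have hne : u ≠ u+2 ∧ u ≠ u+4 ∧ u+2 ≠ u+4 := by
    have : ∀ v : ZMod 6, v ≠ v+2 ∧ v ≠ v+4 ∧ v+2 ≠ v+4 := by decide
    exact this u
  have hle : ρ ≤ π := sub3 hne.1 hne.2.1 hne.2.2 h0 h2 h4
  have hρ0 : ρ ≠ 0 := by simp [hρdef, Multiset.insert_eq_cons]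
  have hσ : (π - ρ) + ρ = π := tsub_add_cancel_of_le hle
  have hLσ : L (π - ρ) = median C6 (π - ρ) := IH _ (sublt hle hρ0)
  have hK : L ρ = ({u, u+2, u+4} : Set (ZMod 6)) := htri u
  have hclaim : median C6 (π - ρ) ∩ ({u, u+2, u+4} : Set (ZMod 6)) = median C6 π :=
    medClaim2 u π h0 h2 h4 z1 z3 z5
  have hmne : (L (π - ρ) ∩ L ρ).Nonempty := by
    rw [hLσ, hK, hclaim]
    exact med_ne π
  calc L π = L ((π - ρ) + ρ) := by rw [hσ]
    _ = L (π - ρ) ∩ L ρ := hL.consistency _ _ hmne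
    _ = median C6 π := by rw [hLσ, hK, hclaim]

lemma case3 (hL : IsABC C6 L) (π : Multiset (ZMod 6)) (u : ZMod 6)
    (h5' : 1 ≤ π.count (u+5)) (h1 : 1 ≤ π.count (u+1))
    (z2 : π.count (u+2) = 0) (z3 : π.count (u+3) = 0) (z4 : π.count (u+4) = 0)
    (IH : ∀ σ, σ < π → L σ = median C6 σ) : L π = median C6 π := by
  set ρ : Multiset (ZMod 6) := {u+5, u+1} with hρdef
  have hne : u+5 ≠ u+1 := by
    have : ∀ v : ZMod 6, v+5 ≠ v+1 := by decide
    exact this u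
  have hle : ρ ≤ π := sub2 hne h5' h1
  have hρ0 : ρ ≠ 0 := by simp [hρdef, Multiset.insert_eq_cons]
  have hσ : (π - ρ) + ρ = π := tsub_add_cancel_of_le hle
  have hLσ : L (π - ρ) = median C6 (π - ρ) := IH _ (sublt hle hρ0)
  have e1 : (u+5)+1 = u := by rw [add_assoc, show (5:ZMod 6)+1 = 0 from by decide, add_zero]
  have e2 : (u+5)+2 = u+1 := by rw [add_assoc, show (5:ZMod 6)+2 = 1 from by decide]
  have hK : L ρ = ({u+5, u, u+1} : Set (ZMod 6)) := by
    rw [hρdef, hL.betweenness, ← e2, int2, e1, e2]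
  have hclaim : median C6 (π - ρ) ∩ ({u+5, u, u+1} : Set (ZMod 6)) = median C6 π :=
    medClaim3 u π h5' h1 z2 z3 z4
  have hmne : (L (π - ρ) ∩ L ρ).Nonempty := by
    rw [hLσ, hK, hclaim]
    exact med_ne π
  calc L π = L ((π - ρ) + ρ) := by rw [hσ]
    _ = L (π - ρ) ∩ L ρ := hL.consistency _ _ hmne
    _ = median C6 π := by rw [hLσ, hK, hclaim]

lemma case4 (hL : IsABC C6 L) (π : Multiset (ZMod 6)) (u : ZMod 6)
    (h0 : 1 ≤ π.count u) (h1 : 1 ≤ π.count (u+1))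
    (z2 : π.count (u+2) = 0) (z3 : π.count (u+3) = 0)
    (z4 : π.count (u+4) = 0) (z5 : π.count (u+5) = 0)
    (IH : ∀ σ, σ < π → L σ = median C6 σ) : L π = median C6 π := by
  set ρ : Multiset (ZMod 6) := {u, u+1} with hρdef
  have hne : u ≠ u+1 := (neadd u).1
  have hle : ρ ≤ π := sub2 hne h0 h1
  have hρ0 : ρ ≠ 0 := by simp [hρdef, Multiset.insert_eq_cons]
  have hσ : (π - ρ) + ρ = π := tsub_add_cancel_of_le hle
  have hLσ : L (π - ρ) = median C6 (π - ρ) := IH _ (sublt hle hρ0)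
  have hK : L ρ = ({u, u+1} : Set (ZMod 6)) := by
    rw [hρdef, hL.betweenness, int1]
  have hclaim : median C6 (π - ρ) ∩ ({u, u+1} : Set (ZMod 6)) = median C6 π :=
    medClaim4 u π h0 h1 z2 z3 z4 z5
  have hmne : (L (π - ρ) ∩ L ρ).Nonempty := by
    rw [hLσ, hK, hclaim]
    exact med_ne π
  calc L π = L ((π - ρ) + ρ) := by rw [hσ]
    _ = L (π - ρ) ∩ L ρ := hL.consistency _ _ hmne
    _ = median C6 π := by rw [hLσ, hK, hclaim]

lemma case5 (hL : IsABC C6 L) (π : Multiset (ZMod 6)) (u : ZMod 6)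
    (h0 : 1 ≤ π.count u)
    (z1 : π.count (u+1) = 0) (z2 : π.count (u+2) = 0) (z3 : π.count (u+3) = 0)
    (z4 : π.count (u+4) = 0) (z5 : π.count (u+5) = 0)
    (IH : ∀ σ, σ < π → L σ = median C6 σ) : L π = median C6 π := by
  set ρ : Multiset (ZMod 6) := {u} with hρdef
  have hle : ρ ≤ π := sub1 h0
  have hρ0 : ρ ≠ 0 := by simp [hρdef]
  have hσ : (π - ρ) + ρ = π := tsub_add_cancel_of_le hle
  have hLσ : L (π - ρ) = median C6 (π - ρ) := IH _ (sublt hle hρ0)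
  have hK : L ρ = ({u} : Set (ZMod 6)) := Lsingle L hL u
  have hclaim : median C6 (π - ρ) ∩ ({u} : Set (ZMod 6)) = median C6 π :=
    medClaim5 u π h0 z1 z2 z3 z4 z5
  have hmne : (L (π - ρ) ∩ L ρ).Nonempty := by
    rw [hLσ, hK, hclaim]
    exact med_ne π
  calc L π = L ((π - ρ) + ρ) := by rw [hσ]
    _ = L (π - ρ) ∩ L ρ := hL.consistency _ _ hmne
    _ = median C6 π := by rw [hLσ, hK, hclaim]

end Cases

/-- Proposition 39: the 6-cycle `C₆` is an ABCE₂-graph: every consensus function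
satisfying (A), (B), (C) and (E₂) coincides with the median function. -/
theorem stmt_19 (L : Multiset (ZMod 6) → Set (ZMod 6)) (hL : IsABC C6 L)
    (hE2 : ∀ u v w : ZMod 6,
      C6.dist u v = 2 → C6.dist v w = 2 → C6.dist u w = 2 →
      interval C6 u v ∩ interval C6 u w = {u} →
      interval C6 u v ∩ interval C6 v w = {v} →
      interval C6 u w ∩ interval C6 v w = {w} →
      u ∈ L {u, v, w} → ({u, v, w} : Set (ZMod 6)) ⊆ L {u, v, w}) :
    ∀ π : Multiset (ZMod 6), L π = median C6 π := by
  have htri := tripleL L hL hE2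
  intro π
  induction π using Multiset.strongInductionOn with
  | _ π IH =>
  by_cases hc1 : ∃ i : ZMod 6, 1 ≤ π.count i ∧ 1 ≤ π.count (i+3)
  · obtain ⟨i, h0, h3⟩ := hc1
    exact case1 L hL π i h0 h3 IH
  · have zz1 : ∀ j : ZMod 6, 1 ≤ π.count j → π.count (j+3) = 0 := by
      intro j hj
      by_contra hcon
      exact hc1 ⟨j, hj, by omega⟩
    by_cases hc2 : ∃ i : ZMod 6, 1 ≤ π.count i ∧ 1 ≤ π.count (i+2) ∧ 1 ≤ π.count (i+4)
    · obtain ⟨i, h0, h2, h4⟩ := hc2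
      have z3 : π.count (i+3) = 0 := zz1 i h0
      have z5 : π.count (i+5) = 0 := by
        have := zz1 (i+2) h2
        rwa [add_assoc, show (2:ZMod 6)+3 = 5 from by decide] at this
      have z1 : π.count (i+1) = 0 := by
        have := zz1 (i+4) h4
        rwa [add_assoc, show (4:ZMod 6)+3 = 1 from by decide] at this
      exact case2 L hL htri π i h0 h2 h4 z1 z3 z5 IH
    · have zz2 : ∀ j : ZMod 6, 1 ≤ π.count j → 1 ≤ π.count (j+2) → π.count (j+4) = 0 := by
        intro j hj hj2
        by_contra hcon
        exact hc2 ⟨j, hj, hj2, by omega⟩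
      by_cases hc3 : ∃ i : ZMod 6, 1 ≤ π.count (i+5) ∧ 1 ≤ π.count (i+1)
      · obtain ⟨i, h5', h1⟩ := hc3
        have e52 : (i+5)+2 = i+1 := by rw [add_assoc, show (5:ZMod 6)+2 = 1 from by decide]
        have e54 : (i+5)+4 = i+3 := by rw [add_assoc, show (5:ZMod 6)+4 = 3 from by decide]
        have e53 : (i+5)+3 = i+2 := by rw [add_assoc, show (5:ZMod 6)+3 = 2 from by decide]
        have e13 : (i+1)+3 = i+4 := by rw [add_assoc]; norm_num
        have z2 : π.count (i+2) = 0 := by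
          have := zz1 (i+5) h5'
          rwa [e53] at this
        have z4 : π.count (i+4) = 0 := by
          have := zz1 (i+1) h1
          rwa [e13] at this
        have z3 : π.count (i+3) = 0 := by
          have := zz2 (i+5) h5' (by rwa [e52])
          rwa [e54] at this
        exact case3 L hL π i h5' h1 z2 z3 z4 IH
      · have zz3 : ∀ j : ZMod 6, 1 ≤ π.count (j+5) → π.count (j+1) = 0 := by
          intro j hj
          by_contra hcon
          exact hc3 ⟨j, hj, by omega⟩
        have zz3' : ∀ j : ZMod 6, 1 ≤ π.count (j+1) → π.count (j+5) = 0 := by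
          intro j hj
          by_contra hcon
          exact hc3 ⟨j, by omega, hj⟩
        have e15 : ∀ i : ZMod 6, (i+1)+5 = i := by
          intro i; rw [add_assoc, show (1:ZMod 6)+5 = 0 from by decide, add_zero]
        have e11 : ∀ i : ZMod 6, (i+1)+1 = i+2 := by intro i; rw [add_assoc]; norm_num
        have e51 : ∀ i : ZMod 6, (i+5)+1 = i := by
          intro i; rw [add_assoc, show (5:ZMod 6)+1 = 0 from by decide, add_zero]
        have e55 : ∀ i : ZMod 6, (i+5)+5 = i+4 := by
          intro i; rw [add_assoc, show (5:ZMod 6)+5 = 4 from by decide]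
        by_cases hc4 : ∃ i : ZMod 6, 1 ≤ π.count i ∧ 1 ≤ π.count (i+1)
        · obtain ⟨i, h0, h1⟩ := hc4
          have z3 : π.count (i+3) = 0 := zz1 i h0
          have z2 : π.count (i+2) = 0 := by
            have := zz3 (i+1) (by rwa [e15])
            rwa [e11] at this
          have z5 : π.count (i+5) = 0 := zz3' i h1
          have z4 : π.count (i+4) = 0 := by
            have := zz3' (i+5) (by rwa [e51])
            rwa [e55] at this
          exact case4 L hL π i h0 h1 z2 z3 z4 z5 IH
        · have zz4 : ∀ j : ZMod 6, 1 ≤ π.count j → π.count (j+1) = 0 := by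
            intro j hj
            by_contra hcon
            exact hc4 ⟨j, hj, by omega⟩
          by_cases hc5 : ∃ i : ZMod 6, 1 ≤ π.count i
          · obtain ⟨i, h0⟩ := hc5
            have z1 : π.count (i+1) = 0 := zz4 i h0
            have z3 : π.count (i+3) = 0 := zz1 i h0
            have z2 : π.count (i+2) = 0 := by
              have := zz3 (i+1) (by rwa [e15])
              rwa [e11] at this
            have z4 : π.count (i+4) = 0 := by
              have := zz3' (i+5) (by rwa [e51])
              rwa [e55] at this
            have z5 : π.count (i+5) = 0 := by
              by_contra hcon
              have := zz4 (i+5) (by omega)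
              rw [e51] at this
              omega
            exact case5 L hL π i h0 z1 z2 z3 z4 z5 IH
          · have hπ0 : π = 0 := by
              by_contra hcard
              obtain ⟨a, ha⟩ := Multiset.exists_mem_of_ne_zero hcard
              exact hc5 ⟨a, Multiset.one_le_count_iff_mem.2 ha⟩
            rw [hπ0, Lempty L hL, med0]

end ArxivABC
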